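/- arXiv:2406.19785 — 3 statements merged into one kernel-verified Lean document; each statement's English description precedes it below -/
import Mathlib

section
/- The following identity holds: ∫_0^{1/4} log(Γ(x)/Γ(1-x)) dx + 3 ∫_{1/2}^{3/4} log(Γ(x)/Γ(1-x)) dx = (1/4) log 2. -/
/-!
Write `g x = log (Γ x / Γ (1 - x))`. The reflection `x ↦ 1 - x` gives `g (1 - x) = -g x`, and
Legendre's duplication formula, applied at `x` and at `1/2 - x`, gives
`g (2x) = (4x - 1) log 2 + g x + g (x + 1/2)`. Let `I₁, I₂, I₃` be the integrals of `g` over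
`[0, 1/4]`, `[1/4, 1/2]`, `[1/2, 3/4]`. Integrating the duplication identity over `[0, 1/4]` gives
`(I₁ + I₂) / 2 = -(log 2) / 8 + I₁ + I₃`, the reflection gives `I₃ = -I₂`, and eliminating `I₂`
yields `I₁ + 3 I₃ = (log 2) / 4`. The integrals exist because `g x + log x` is continuous on `[0, 1)`.
-/

open Real MeasureTheory Set intervalIntegral

noncomputable def logGammaRatio (x : ℝ) : ℝ := log (Gamma x / Gamma (1 - x))

lemma logGammaRatio_one_sub (x : ℝ) : logGammaRatio (1 - x) = -logGammaRatio x := by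
  rw [logGammaRatio, logGammaRatio, sub_sub_cancel, ← log_inv, inv_div]

lemma logGammaRatio_eq_sub {x : ℝ} (hx0 : 0 < x) (hx1 : x < 1) :
    logGammaRatio x = log (Gamma x) - log (Gamma (1 - x)) :=
  log_div (Gamma_pos_of_pos hx0).ne' (Gamma_pos_of_pos (sub_pos.mpr hx1)).ne'

lemma log_Gamma_two_mul {x : ℝ} (hx : 0 < x) :
    log (Gamma (2 * x)) =
      log (Gamma x) + log (Gamma (x + 1 / 2)) + (2 * x - 1) * log 2 - log √π := by
  have h := congrArg log (Gamma_mul_Gamma_add_half x)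
  rw [log_mul (Gamma_pos_of_pos hx).ne' (Gamma_pos_of_pos (by linarith)).ne',
    log_mul (by positivity) (by positivity), log_mul (Gamma_pos_of_pos (by linarith)).ne'
      (by positivity), log_rpow two_pos] at h
  linarith

lemma logGammaRatio_two_mul {x : ℝ} (hx0 : 0 < x) (hx1 : x < 1 / 2) :
    logGammaRatio (2 * x) = (4 * x - 1) * log 2 + logGammaRatio x + logGammaRatio (x + 1 / 2) := by
  have h₁ := log_Gamma_two_mul hx0
  have h₂ := log_Gamma_two_mul (sub_pos.mpr hx1)
  rw [show 2 * (1 / 2 - x) = 1 - 2 * x by ring, show 1 / 2 - x + 1 / 2 = 1 - x by ring] at h₂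
  rw [logGammaRatio_eq_sub (by linarith) (by linarith), logGammaRatio_eq_sub hx0 (by linarith),
    logGammaRatio_eq_sub (by linarith) (by linarith), show 1 - (x + 1 / 2) = 1 / 2 - x by ring]
  linarith

lemma continuousAt_log_Gamma {x : ℝ} (hx : 0 < x) : ContinuousAt (fun y => log (Gamma y)) x :=
  (differentiableOn_Gamma_Ioi.differentiableAt (Ioi_mem_nhds hx)).continuousAt.log
    (Gamma_pos_of_pos hx).ne'

lemma logGammaRatio_eq_sub_log {x : ℝ} (hx0 : 0 < x) (hx1 : x < 1) :
    logGammaRatio x = log (Gamma (x + 1)) - log (Gamma (1 - x)) - log x := by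
  rw [logGammaRatio_eq_sub hx0 hx1, Gamma_add_one hx0.ne',
    log_mul hx0.ne' (Gamma_pos_of_pos hx0).ne']
  ring

lemma intervalIntegrable_logGammaRatio_zero {b : ℝ} (hb0 : 0 ≤ b) (hb1 : b < 1) :
    IntervalIntegrable logGammaRatio volume 0 b := by
  have hregular :
      ContinuousOn (fun x => log (Gamma (x + 1)) - log (Gamma (1 - x))) (uIcc 0 b) := by
    intro x hx
    rw [uIcc_of_le hb0] at hx
    have h₁ : 0 < x + 1 := by linarith [hx.1]
    have h₂ : 0 < 1 - x := by linarith [hx.2]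
    refine ContinuousAt.continuousWithinAt (ContinuousAt.sub ?_ ?_)
    · exact (continuousAt_log_Gamma h₁).comp (x := x) (continuous_add_const 1).continuousAt
    · exact (continuousAt_log_Gamma h₂).comp (x := x) (continuous_sub_left 1).continuousAt
  refine (hregular.intervalIntegrable.sub intervalIntegrable_log').congr fun x hx => ?_
  rw [uIoc_of_le hb0] at hx
  exact (logGammaRatio_eq_sub_log hx.1 (hx.2.trans_lt hb1)).symm

lemma intervalIntegrable_logGammaRatio {a b : ℝ} (ha0 : 0 ≤ a) (ha1 : a < 1) (hb0 : 0 ≤ b)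
    (hb1 : b < 1) : IntervalIntegrable logGammaRatio volume a b :=
  (intervalIntegrable_logGammaRatio_zero ha0 ha1).symm.trans
    (intervalIntegrable_logGammaRatio_zero hb0 hb1)

lemma integral_logGammaRatio_one_sub (a b : ℝ) :
    ∫ x in a..b, logGammaRatio x = -∫ x in 1 - b..1 - a, logGammaRatio x := by
  rw [← integral_comp_sub_left, ← intervalIntegral.integral_neg]
  simp only [logGammaRatio_one_sub, neg_neg]

lemma integral_logGammaRatio_two_mul {b : ℝ} (hb0 : 0 ≤ b) (hb1 : b < 1 / 2) :
    (1 / 2) * ∫ x in 0..2 * b, logGammaRatio x =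
      (2 * b ^ 2 - b) * log 2 + (∫ x in 0..b, logGammaRatio x)
        + ∫ x in 1 / 2..b + 1 / 2, logGammaRatio x := by
  have hscale :
      ∫ x in 0..b, logGammaRatio (2 * x) = (1 / 2) * ∫ x in 0..2 * b, logGammaRatio x := by
    rw [integral_comp_mul_left _ two_ne_zero, mul_zero, smul_eq_mul, one_div]
  have hshift :
      ∫ x in 0..b, logGammaRatio (x + 1 / 2) = ∫ x in 1 / 2..b + 1 / 2, logGammaRatio x := by
    rw [integral_comp_add_right, zero_add]
  have hlinear : ∫ x in 0..b, (4 * x - 1) * log 2 = (2 * b ^ 2 - b) * log 2 := by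
    rw [intervalIntegral.integral_mul_const,
      intervalIntegral.integral_sub (intervalIntegrable_id.const_mul 4) (by simp),
      intervalIntegral.integral_const_mul, integral_id, intervalIntegral.integral_const]
    simp only [smul_eq_mul]
    ring
  have hdup : ∫ x in 0..b, logGammaRatio (2 * x) =
      ∫ x in 0..b, ((4 * x - 1) * log 2 + logGammaRatio x + logGammaRatio (x + 1 / 2)) := by
    refine integral_congr_ae (Filter.Eventually.of_forall fun x hx => ?_)
    rw [uIoc_of_le hb0] at hx
    exact logGammaRatio_two_mul hx.1 (by linarith [hx.2])
  have hint : IntervalIntegrable logGammaRatio volume 0 b :=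
    intervalIntegrable_logGammaRatio_zero hb0 (by linarith)
  have hint_shift : IntervalIntegrable (fun x => logGammaRatio (x + 1 / 2)) volume 0 b := by
    simpa using (intervalIntegrable_logGammaRatio (a := 1 / 2) (b := b + 1 / 2) (by norm_num)
      (by norm_num) (by linarith) (by linarith)).comp_add_right (1 / 2)
  have hint_linear : IntervalIntegrable (fun x : ℝ => (4 * x - 1) * log 2) volume 0 b :=
    (by fun_prop : Continuous fun x : ℝ => (4 * x - 1) * log 2).intervalIntegrable _ _
  rw [← hscale, hdup, integral_add (hint_linear.add hint) hint_shift,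
    integral_add hint_linear hint, hlinear, hshift]

theorem integral_log_gamma_ratio_two_two_two :
    (∫ x in (0 : ℝ)..(1 / 4 : ℝ), Real.log (Real.Gamma x / Real.Gamma (1 - x)))
      + 3 * (∫ x in (1 / 2 : ℝ)..(3 / 4 : ℝ), Real.log (Real.Gamma x / Real.Gamma (1 - x)))
      = (1 / 4) * Real.log 2 := by
  change (∫ x in (0 : ℝ)..1 / 4, logGammaRatio x) + 3 * ∫ x in (1 / 2 : ℝ)..3 / 4, logGammaRatio x
    = _
  have hdup := integral_logGammaRatio_two_mul (b := 1 / 4) (by norm_num) (by norm_num)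
  have hsplit := integral_add_adjacent_intervals
    (intervalIntegrable_logGammaRatio_zero (b := 1 / 4) (by norm_num) (by norm_num))
    (intervalIntegrable_logGammaRatio (a := 1 / 4) (b := 1 / 2) (by norm_num) (by norm_num)
      (by norm_num) (by norm_num))
  have hsymm := integral_logGammaRatio_one_sub (1 / 2) (3 / 4)
  norm_num at hdup hsplit hsymm ⊢
  linarith
end

section
/- Complex beta integral: for real w₁, w₂ with 0 < w₁ < 1, 0 < w₂ < 1 and w₁ + w₂ > 1, ∫_{ℂ} |z|^{−2w₁} |1−z|^{−2w₂} dA(z) = π · Γ(1−w₁) Γ(1−w₂) Γ(w₁+w₂−1) / ( Γ(w₁) Γ(w₂) Γ(2−w₁−w₂) ), where dA is Lebesgue measure on ℂ ≅ ℝ². -/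
/-!
Writing `Γ(w) r^(-2w) = ∫₀^∞ t^(w-1) e^(-r²t) dt` for `r = |z|` and `r = |1 - z|` turns the
integrand into a superposition of Gaussians `e^(-(t|z|² + s|1-z|²))`, whose integral over `ℂ` is
`π/(t+s) · e^(-ts/(t+s))`. After the substitution `s = tσ` the `t`-integral is again a Gamma
integral, equal to `Γ(w₁+w₂-1) (σ/(1+σ))^(1-w₁-w₂)`, and what remains is the Beta integral
`∫₀^∞ σ^(-w₁) (1+σ)^(w₁+w₂-2) dσ = Γ(1-w₁) Γ(1-w₂) / Γ(2-w₁-w₂)`, evaluated by the same Gamma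
trick. Working with lower Lebesgue integrals of nonnegative functions, Tonelli applies freely and
the finiteness of the integral comes out of the computation.
-/

open MeasureTheory Real Set
open scoped ENNReal

theorem lintegral_rpow_mul_exp_neg_mul_Ioi {a r : ℝ} (ha : 0 < a) (hr : 0 < r) :
    ∫⁻ t in Ioi (0 : ℝ), ENNReal.ofReal (t ^ (a - 1) * rexp (-(r * t)))
      = ENNReal.ofReal (r ^ (-a) * Gamma a) := by
  rw [← ofReal_integral_eq_lintegral_ofReal, integral_rpow_mul_exp_neg_mul_Ioi ha hr, one_div,
    inv_rpow hr.le, ← rpow_neg hr.le]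
  · simpa [IntegrableOn, neg_mul] using
      integrableOn_rpow_mul_exp_neg_mul_rpow (p := 1) (by linarith : -1 < a - 1) one_pos hr
  · filter_upwards [ae_restrict_mem measurableSet_Ioi] with t (ht : 0 < t)
    positivity

theorem lintegral_rpow_mul_exp_neg_sq_mul_Ioi {a x : ℝ} (ha : 0 < a) (hx : 0 < x) :
    ∫⁻ t in Ioi (0 : ℝ), ENNReal.ofReal (t ^ (a - 1) * rexp (-(x ^ 2 * t)))
      = ENNReal.ofReal (Gamma a * x ^ (-2 * a)) := by
  rw [lintegral_rpow_mul_exp_neg_mul_Ioi ha (by positivity), mul_comm, ← rpow_natCast,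
    ← rpow_mul hx.le]
  norm_num

theorem ofReal_Gamma_mul_Gamma_mul_rpow_mul_rpow {a b x y : ℝ} (ha : 0 < a) (hb : 0 < b)
    (hx : 0 < x) (hy : 0 < y) :
    ENNReal.ofReal (Gamma a * Gamma b * (x ^ (-2 * a) * y ^ (-2 * b)))
      = ∫⁻ t in Ioi (0 : ℝ), ∫⁻ s in Ioi (0 : ℝ),
          ENNReal.ofReal (t ^ (a - 1) * s ^ (b - 1) * rexp (-(t * x ^ 2 + s * y ^ 2))) := by
  have hsplit : ∀ t ∈ Ioi (0 : ℝ), ∀ s ∈ Ioi (0 : ℝ),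
      ENNReal.ofReal (t ^ (a - 1) * s ^ (b - 1) * rexp (-(t * x ^ 2 + s * y ^ 2)))
        = ENNReal.ofReal (t ^ (a - 1) * rexp (-(x ^ 2 * t)))
          * ENNReal.ofReal (s ^ (b - 1) * rexp (-(y ^ 2 * s))) := by
    intro t (ht : 0 < t) s _
    rw [← ENNReal.ofReal_mul (by positivity), neg_add, exp_add]
    ring_nf
  rw [setLIntegral_congr_fun measurableSet_Ioi fun t ht =>
      setLIntegral_congr_fun measurableSet_Ioi (hsplit t ht),
    lintegral_lintegral_mul (by fun_prop) (by fun_prop),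
    lintegral_rpow_mul_exp_neg_sq_mul_Ioi ha hx, lintegral_rpow_mul_exp_neg_sq_mul_Ioi hb hy,
    ← ENNReal.ofReal_mul (by positivity)]
  ring_nf

theorem setLIntegral_comp_mul_left_Ioi (g : ℝ → ℝ≥0∞) (a : ℝ) {b : ℝ} (hb : 0 < b) :
    ENNReal.ofReal b * ∫⁻ x in Ioi a, g (b * x) = ∫⁻ x in Ioi (b * a), g x := by
  have hemb : MeasurableEmbedding (b * ·) := (Homeomorph.mulLeft₀ b hb.ne').measurableEmbedding
  have hpre : (b * ·) ⁻¹' Ioi (b * a) = Ioi a := by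
    rw [preimage_const_mul_Ioi₀ _ hb, mul_div_cancel_left₀ _ hb.ne']
  rw [← hpre, ← hemb.lintegral_map, ← hemb.restrict_map, Real.map_volume_mul_left hb.ne',
    Measure.restrict_smul, lintegral_smul_measure, smul_eq_mul, ← mul_assoc,
    ← ENNReal.ofReal_mul hb.le, abs_of_pos (inv_pos.2 hb), mul_inv_cancel₀ hb.ne',
    ENNReal.ofReal_one, one_mul]

theorem ofReal_Gamma_add_mul_lintegral_rpow_mul_one_add_rpow {p q : ℝ} (hp : 0 < p)
    (hq : 0 < q) :
    ENNReal.ofReal (Gamma (p + q)) * ∫⁻ σ in Ioi (0 : ℝ),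
        ENNReal.ofReal (σ ^ (p - 1) * (1 + σ) ^ (-(p + q)))
      = ENNReal.ofReal (Gamma p * Gamma q) := by
  have hGamma : ∀ σ ∈ Ioi (0 : ℝ),
      ENNReal.ofReal (Gamma (p + q)) * ENNReal.ofReal (σ ^ (p - 1) * (1 + σ) ^ (-(p + q)))
        = ∫⁻ u in Ioi (0 : ℝ), ENNReal.ofReal (u ^ (p + q - 1) * rexp (-u))
            * ENNReal.ofReal (σ ^ (p - 1) * rexp (-(u * σ))) := by
    intro σ (hσ : 0 < σ)
    rw [← ENNReal.ofReal_mul (by positivity),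
      show Gamma (p + q) * (σ ^ (p - 1) * (1 + σ) ^ (-(p + q)))
        = σ ^ (p - 1) * ((1 + σ) ^ (-(p + q)) * Gamma (p + q)) by ring,
      ENNReal.ofReal_mul (by positivity),
      ← lintegral_rpow_mul_exp_neg_mul_Ioi (by positivity) (by positivity : 0 < 1 + σ),
      ← lintegral_const_mul' _ _ ENNReal.ofReal_ne_top]
    refine setLIntegral_congr_fun measurableSet_Ioi fun u (hu : 0 < u) => ?_
    rw [← ENNReal.ofReal_mul (by positivity), ← ENNReal.ofReal_mul (by positivity),
      show -((1 + σ) * u) = -u + -(u * σ) by ring, exp_add]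
    ring_nf
  have hinner : ∀ u ∈ Ioi (0 : ℝ),
      ∫⁻ σ in Ioi (0 : ℝ), ENNReal.ofReal (u ^ (p + q - 1) * rexp (-u))
          * ENNReal.ofReal (σ ^ (p - 1) * rexp (-(u * σ)))
        = ENNReal.ofReal (Gamma p) * ENNReal.ofReal (u ^ (q - 1) * rexp (-(1 * u))) := by
    intro u (hu : 0 < u)
    rw [lintegral_const_mul' _ _ ENNReal.ofReal_ne_top, lintegral_rpow_mul_exp_neg_mul_Ioi hp hu,
      ← ENNReal.ofReal_mul (by positivity), ← ENNReal.ofReal_mul (by positivity),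
      show q - 1 = (p + q - 1) + -p by ring, rpow_add hu]
    ring_nf
  rw [← lintegral_const_mul' _ _ ENNReal.ofReal_ne_top,
    setLIntegral_congr_fun measurableSet_Ioi hGamma, lintegral_lintegral_swap (by fun_prop),
    setLIntegral_congr_fun measurableSet_Ioi hinner, lintegral_const_mul' _ _ ENNReal.ofReal_ne_top,
    lintegral_rpow_mul_exp_neg_mul_Ioi hq one_pos, one_rpow, one_mul,
    ← ENNReal.ofReal_mul (by positivity)]

section Gaussian

variable {V : Type*} [NormedAddCommGroup V] [InnerProductSpace ℝ V]

theorem mul_norm_sq_add_mul_norm_sub_sq {t s : ℝ} (hts : t + s ≠ 0) (x y : V) :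
    t * ‖x‖ ^ 2 + s * ‖y - x‖ ^ 2
      = (t + s) * ‖x - (s / (t + s)) • y‖ ^ 2 + t * s / (t + s) * ‖y‖ ^ 2 := by
  rw [norm_sub_sq_real, norm_sub_sq_real, norm_smul, inner_smul_right, real_inner_comm,
    Real.norm_eq_abs, mul_pow, sq_abs]
  field_simp
  ring

variable [FiniteDimensional ℝ V] [MeasurableSpace V] [BorelSpace V]

theorem lintegral_exp_neg_mul_norm_sq {c : ℝ} (hc : 0 < c) :
    ∫⁻ x : V, ENNReal.ofReal (rexp (-c * ‖x‖ ^ 2))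
      = ENNReal.ofReal ((π / c) ^ (Module.finrank ℝ V / 2 : ℝ)) := by
  have hI := GaussianFourier.integral_rexp_neg_mul_sq_norm (V := V) hc
  rw [← hI, ofReal_integral_eq_lintegral_ofReal]
  · exact Integrable.of_integral_ne_zero (by rw [hI]; positivity)
  · exact ae_of_all _ fun x => (exp_pos _).le

theorem lintegral_exp_neg_mul_norm_sq_add_mul_norm_sub_sq {t s : ℝ} (ht : 0 < t) (hs : 0 < s)
    (y : V) :
    ∫⁻ x : V, ENNReal.ofReal (rexp (-(t * ‖x‖ ^ 2 + s * ‖y - x‖ ^ 2)))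
      = ENNReal.ofReal ((π / (t + s)) ^ (Module.finrank ℝ V / 2 : ℝ)
          * rexp (-(t * s / (t + s) * ‖y‖ ^ 2))) := by
  simp_rw [mul_norm_sq_add_mul_norm_sub_sq (by positivity : t + s ≠ 0), neg_add, exp_add,
    ENNReal.ofReal_mul (exp_pos _).le, ← neg_mul]
  rw [lintegral_mul_const' _ _ ENNReal.ofReal_ne_top,
    lintegral_sub_right_eq_self (fun x => ENNReal.ofReal (rexp (-(t + s) * ‖x‖ ^ 2))),
    lintegral_exp_neg_mul_norm_sq (by positivity), ENNReal.ofReal_mul (by positivity)]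

end Gaussian

theorem lintegral_exp_neg_mul_norm_sq_add_mul_norm_one_sub_sq {t s : ℝ} (ht : 0 < t)
    (hs : 0 < s) :
    ∫⁻ z : ℂ, ENNReal.ofReal (rexp (-(t * ‖z‖ ^ 2 + s * ‖1 - z‖ ^ 2)))
      = ENNReal.ofReal (π / (t + s) * rexp (-(t * s / (t + s)))) := by
  simpa using lintegral_exp_neg_mul_norm_sq_add_mul_norm_sub_sq (V := ℂ) ht hs 1

theorem lintegral_Ioi_lintegral_Ioi_rpow_mul_rpow_mul_exp_neg_mul_div_add {a b : ℝ}
    (hab : 1 < a + b) :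
    ∫⁻ t in Ioi (0 : ℝ), ∫⁻ s in Ioi (0 : ℝ),
        ENNReal.ofReal (t ^ (a - 1) * s ^ (b - 1) * (π / (t + s) * rexp (-(t * s / (t + s)))))
      = ENNReal.ofReal (π * Gamma (a + b - 1)) * ∫⁻ σ in Ioi (0 : ℝ),
          ENNReal.ofReal (σ ^ ((1 - a) - 1) * (1 + σ) ^ (-((1 - a) + (1 - b)))) := by
  have hscale : ∀ t ∈ Ioi (0 : ℝ),
      ∫⁻ s in Ioi (0 : ℝ),
          ENNReal.ofReal (t ^ (a - 1) * s ^ (b - 1) * (π / (t + s) * rexp (-(t * s / (t + s)))))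
        = ∫⁻ σ in Ioi (0 : ℝ), ENNReal.ofReal (π * σ ^ (b - 1) * (1 + σ)⁻¹)
            * ENNReal.ofReal (t ^ ((a + b - 1) - 1) * rexp (-(σ / (1 + σ) * t))) := by
    intro t (ht : 0 < t)
    have hsubst := setLIntegral_comp_mul_left_Ioi (fun s => ENNReal.ofReal
      (t ^ (a - 1) * s ^ (b - 1) * (π / (t + s) * rexp (-(t * s / (t + s)))))) 0 ht
    rw [mul_zero] at hsubst
    rw [← hsubst, ← lintegral_const_mul' _ _ ENNReal.ofReal_ne_top]
    refine setLIntegral_congr_fun measurableSet_Ioi fun σ (hσ : 0 < σ) => ?_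
    rw [← ENNReal.ofReal_mul ht.le, ← ENNReal.ofReal_mul (by positivity)]
    congr 1
    rw [mul_rpow ht.le hσ.le, show (a + b - 1) - 1 = (a - 1) + (b - 1) by ring, rpow_add ht,
      show t * (t * σ) / (t + t * σ) = σ / (1 + σ) * t by field_simp]
    field_simp
  rw [setLIntegral_congr_fun measurableSet_Ioi hscale,
    lintegral_lintegral_swap (by fun_prop), ← lintegral_const_mul' _ _ ENNReal.ofReal_ne_top]
  refine setLIntegral_congr_fun measurableSet_Ioi fun σ (hσ : 0 < σ) => ?_
  rw [lintegral_const_mul' _ _ ENNReal.ofReal_ne_top,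
    lintegral_rpow_mul_exp_neg_mul_Ioi (by linarith) (by positivity),
    ← ENNReal.ofReal_mul (by positivity), ← ENNReal.ofReal_mul (by positivity)]
  congr 1
  have h1σ : 0 < 1 + σ := by positivity
  rw [div_rpow hσ.le h1σ.le, rpow_neg h1σ.le, show (1 - a) - 1 = (b - 1) + -(a + b - 1) by ring,
    rpow_add hσ, show -((1 - a) + (1 - b)) = (a + b - 1) + -1 by ring, rpow_add h1σ,
    rpow_neg_one, rpow_neg hσ.le]
  field_simp

theorem ofReal_Gamma_mul_Gamma_mul_lintegral_norm_rpow_mul_norm_one_sub_rpow {a b : ℝ}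
    (ha : 0 < a) (hb : 0 < b) (hab : 1 < a + b) :
    ENNReal.ofReal (Gamma a * Gamma b)
        * ∫⁻ z : ℂ, ENNReal.ofReal (‖z‖ ^ (-2 * a) * ‖1 - z‖ ^ (-2 * b))
      = ENNReal.ofReal (π * Gamma (a + b - 1)) * ∫⁻ σ in Ioi (0 : ℝ),
          ENNReal.ofReal (σ ^ ((1 - a) - 1) * (1 + σ) ^ (-((1 - a) + (1 - b)))) := by
  have hae : ∀ᵐ z : ℂ, z ∉ ({0, 1} : Set ℂ) :=
    measure_eq_zero_iff_ae_notMem.1 ((toFinite _).measure_zero _)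
  calc
    _ = ∫⁻ z : ℂ, ∫⁻ t in Ioi (0 : ℝ), ∫⁻ s in Ioi (0 : ℝ), ENNReal.ofReal
        (t ^ (a - 1) * s ^ (b - 1) * rexp (-(t * ‖z‖ ^ 2 + s * ‖1 - z‖ ^ 2))) := by
      rw [← lintegral_const_mul' _ _ ENNReal.ofReal_ne_top]
      refine lintegral_congr_ae ?_
      filter_upwards [hae] with z hz
      simp only [mem_insert_iff, mem_singleton_iff, not_or] at hz
      rw [← ENNReal.ofReal_mul (by positivity)]
      exact ofReal_Gamma_mul_Gamma_mul_rpow_mul_rpow ha hb (norm_pos_iff.2 hz.1)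
        (norm_pos_iff.2 (sub_ne_zero.2 (Ne.symm hz.2)))
    _ = ∫⁻ t in Ioi (0 : ℝ), ∫⁻ s in Ioi (0 : ℝ), ∫⁻ z : ℂ, ENNReal.ofReal
        (t ^ (a - 1) * s ^ (b - 1) * rexp (-(t * ‖z‖ ^ 2 + s * ‖1 - z‖ ^ 2))) := by
      rw [lintegral_lintegral_swap (by fun_prop)]
      exact setLIntegral_congr_fun measurableSet_Ioi fun t _ =>
        lintegral_lintegral_swap (by fun_prop)
    _ = ∫⁻ t in Ioi (0 : ℝ), ∫⁻ s in Ioi (0 : ℝ), ENNReal.ofReal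
        (t ^ (a - 1) * s ^ (b - 1) * (π / (t + s) * rexp (-(t * s / (t + s))))) := by
      refine setLIntegral_congr_fun measurableSet_Ioi fun t (ht : 0 < t) =>
        setLIntegral_congr_fun measurableSet_Ioi fun s (hs : 0 < s) => ?_
      simp_rw [ENNReal.ofReal_mul (by positivity : 0 ≤ t ^ (a - 1) * s ^ (b - 1))]
      rw [lintegral_const_mul' _ _ ENNReal.ofReal_ne_top,
        lintegral_exp_neg_mul_norm_sq_add_mul_norm_one_sub_sq ht hs]
    _ = _ := lintegral_Ioi_lintegral_Ioi_rpow_mul_rpow_mul_exp_neg_mul_div_add hab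

theorem lintegral_norm_rpow_mul_norm_one_sub_rpow {a b : ℝ} (ha : 0 < a) (ha' : a < 1)
    (hb : 0 < b) (hb' : b < 1) (hab : 1 < a + b) :
    ∫⁻ z : ℂ, ENNReal.ofReal (‖z‖ ^ (-2 * a) * ‖1 - z‖ ^ (-2 * b))
      = ENNReal.ofReal (π * (Gamma (1 - a) * Gamma (1 - b) * Gamma (a + b - 1))
          / (Gamma a * Gamma b * Gamma (2 - a - b))) := by
  have hΓa := Gamma_pos_of_pos ha
  have hΓb := Gamma_pos_of_pos hb
  have hΓab := Gamma_pos_of_pos (by linarith : 0 < a + b - 1)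
  have hΓ := Gamma_pos_of_pos (by linarith : 0 < 2 - a - b)
  have hΓa' := Gamma_pos_of_pos (by linarith : 0 < 1 - a)
  have hΓb' := Gamma_pos_of_pos (by linarith : 0 < 1 - b)
  rw [ENNReal.ofReal_div_of_pos (by positivity),
    ENNReal.eq_div_iff (by positivity) ENNReal.ofReal_ne_top]
  calc
    _ = ENNReal.ofReal (Gamma (1 - a + (1 - b))) * (ENNReal.ofReal (Gamma a * Gamma b)
        * ∫⁻ z : ℂ, ENNReal.ofReal (‖z‖ ^ (-2 * a) * ‖1 - z‖ ^ (-2 * b))) := by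
      rw [ENNReal.ofReal_mul (by positivity), show 2 - a - b = 1 - a + (1 - b) by ring]
      ring
    _ = ENNReal.ofReal (π * Gamma (a + b - 1)) * (ENNReal.ofReal (Gamma (1 - a + (1 - b)))
        * ∫⁻ σ in Ioi (0 : ℝ),
          ENNReal.ofReal (σ ^ ((1 - a) - 1) * (1 + σ) ^ (-((1 - a) + (1 - b))))) := by
      rw [ofReal_Gamma_mul_Gamma_mul_lintegral_norm_rpow_mul_norm_one_sub_rpow ha hb hab]
      ring
    _ = _ := by
      rw [ofReal_Gamma_add_mul_lintegral_rpow_mul_one_add_rpow (by linarith) (by linarith),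
        ← ENNReal.ofReal_mul (by positivity)]
      ring_nf

theorem complex_beta_integral (w₁ w₂ : ℝ) (h1 : 0 < w₁) (h1' : w₁ < 1)
    (h2 : 0 < w₂) (h2' : w₂ < 1) (h : 1 < w₁ + w₂) :
    ∫ z : ℂ, ‖z‖ ^ (-2 * w₁) * ‖1 - z‖ ^ (-2 * w₂)
      = Real.pi * (Real.Gamma (1 - w₁) * Real.Gamma (1 - w₂) * Real.Gamma (w₁ + w₂ - 1))
          / (Real.Gamma w₁ * Real.Gamma w₂ * Real.Gamma (2 - w₁ - w₂)) := by
  rw [integral_eq_lintegral_of_nonneg_ae (ae_of_all _ fun z => by positivity) (by fun_prop),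
    lintegral_norm_rpow_mul_norm_one_sub_rpow h1 h1' h2 h2' h, ENNReal.toReal_ofReal]
  have hΓ₁ := Gamma_pos_of_pos (by linarith : 0 < 1 - w₁)
  have hΓ₂ := Gamma_pos_of_pos (by linarith : 0 < 1 - w₂)
  have hΓ₁₂ := Gamma_pos_of_pos (by linarith : 0 < w₁ + w₂ - 1)
  have hΓ := Gamma_pos_of_pos (by linarith : 0 < 2 - w₁ - w₂)
  positivity
end

section
/- Define, for 2/3 < t < 1, f₃(t) := (1/2)(1 − log(π V/2)) − (1/V)·( ∫_0^{V/2} log l(x) dx − 3 ∫_{t−V/2}^{t} log l(x) dx ), where V := 3t − 2 and l(x) := Γ(x)/Γ(1−x). Then lim_{t→(2/3)⁺} f₃(t) = −(1/2) log π + (3/2) log( Γ(2/3)/Γ(1/3) ). -/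
open Filter

noncomputable def l (x : ℝ) : ℝ := Real.Gamma x / Real.Gamma (1 - x)

/-- The normalized canonical height of the log pair on `P¹_ℤ` with weights `(t,t,t)`. -/
noncomputable def fthree (t : ℝ) : ℝ :=
  (1 / 2) * (1 - Real.log (Real.pi * (3 * t - 2) / 2))
    - (1 / (3 * t - 2)) *
        ((∫ x in (0 : ℝ)..((3 * t - 2) / 2), Real.log (l x))
          - 3 * ∫ x in (t - (3 * t - 2) / 2)..t, Real.log (l x))

open Real Set Topology

/-!
Write `V = 3t - 2`. Both integrals in `fthree t` run over intervals of length `V / 2` shrinking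
to a point, so after division by `V` they tend to half the value of the integrand there; the
second one gives `(3 / 2) log l(2/3)`. The first integrand is singular at `0`, but
`Γ(x) = Γ(1 + x) / x` gives `log l(x) = -log x + G(x)` with `G(x) = log Γ(1 + x) - log Γ(1 - x)`
continuous and `G(0) = 0`. The explicit integral of `-log x` over `[0, V/2]` cancels everything
in `(1 - log (π V / 2)) / 2` except `-(log π) / 2`.
-/

noncomputable def logGammaOneAddSubLogGammaOneSub (x : ℝ) : ℝ :=
  log (Gamma (1 + x)) - log (Gamma (1 - x))

theorem tendsto_inv_smul_integral_of_continuousAt {ι E : Type*} [NormedAddCommGroup E]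
    [NormedSpace ℝ E] [CompleteSpace E] {lt : Filter ι} {f : ℝ → E} {c : ℝ}
    (hfm : StronglyMeasurableAtFilter f (𝓝 c)) (hf : ContinuousAt f c) {u v : ι → ℝ}
    (hu : Tendsto u lt (𝓝 c)) (hv : Tendsto v lt (𝓝 c)) (huv : ∀ᶠ t in lt, u t ≠ v t) :
    Tendsto (fun t => (v t - u t)⁻¹ • ∫ x in u t..v t, f x) lt (𝓝 (f c)) := by
  have hsmall := (intervalIntegral.integral_sub_linear_isLittleO_of_tendsto_ae hfm
    (hf.mono_left inf_le_left) hu hv).tendsto_inv_smul_nhds_zero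
  rw [← zero_add (f c)]
  refine (hsmall.add_const (f c)).congr' ?_
  filter_upwards [huv] with t ht
  simp only [Pi.sub_apply, smul_sub, smul_smul]
  rw [inv_mul_cancel₀ (sub_ne_zero.mpr ht.symm), one_smul, sub_add_cancel]

theorem continuousOn_Gamma_Ioi : ContinuousOn Gamma (Ioi 0) := fun _ hx =>
  (differentiableAt_Gamma fun m =>
    ((neg_nonpos.mpr (Nat.cast_nonneg m)).trans_lt hx).ne').continuousAt.continuousWithinAt

theorem continuousOn_log_Gamma_comp {φ : ℝ → ℝ} {s : Set ℝ} (hφ : ContinuousOn φ s)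
    (hpos : ∀ x ∈ s, 0 < φ x) : ContinuousOn (fun x => log (Gamma (φ x))) s :=
  (continuousOn_Gamma_Ioi.comp hφ hpos).log fun x hx => (Gamma_pos_of_pos (hpos x hx)).ne'

theorem continuousOn_log_l : ContinuousOn (fun x => log (l x)) (Ioo 0 1) := by
  have hlog : EqOn (fun x => log (l x))
      (fun x => log (Gamma (id x)) - log (Gamma (1 - x))) (Ioo 0 1) := fun x hx =>
    log_div (Gamma_pos_of_pos hx.1).ne' (Gamma_pos_of_pos (sub_pos.mpr hx.2)).ne'
  exact ContinuousOn.congr ((continuousOn_log_Gamma_comp continuousOn_id fun x hx => hx.1).sub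
    (continuousOn_log_Gamma_comp (by fun_prop) fun x hx => sub_pos.mpr hx.2)) hlog

theorem continuousOn_logGammaOneAddSubLogGammaOneSub :
    ContinuousOn logGammaOneAddSubLogGammaOneSub (Ioo (-1) 1) :=
  (continuousOn_log_Gamma_comp (by fun_prop) fun x hx => by linarith [hx.1]).sub
    (continuousOn_log_Gamma_comp (by fun_prop) fun x hx => sub_pos.mpr hx.2)

theorem log_l_eq_neg_log_add {x : ℝ} (hx0 : 0 ≤ x) (hx1 : x < 1) :
    log (l x) = -log x + logGammaOneAddSubLogGammaOneSub x := by
  rcases hx0.eq_or_lt with rfl | hx0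
  · simp [l, logGammaOneAddSubLogGammaOneSub]
  have hΓ := Gamma_pos_of_pos hx0
  rw [l, logGammaOneAddSubLogGammaOneSub, add_comm 1 x, Gamma_add_one hx0.ne',
    log_mul hx0.ne' hΓ.ne', log_div hΓ.ne' (Gamma_pos_of_pos (sub_pos.mpr hx1)).ne']
  ring

theorem integral_log_l {s : ℝ} (hs0 : 0 < s) (hs1 : s < 1) :
    ∫ x in (0 : ℝ)..s, log (l x)
      = s - s * log s + ∫ x in (0 : ℝ)..s, logGammaOneAddSubLogGammaOneSub x := by
  have hIcc : uIcc 0 s ⊆ Ioo (-1) 1 := by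
    rw [uIcc_of_le hs0.le]
    exact Icc_subset_Ioo (by norm_num) hs1
  rw [intervalIntegral.integral_congr fun x hx => log_l_eq_neg_log_add (by
      rw [uIcc_of_le hs0.le] at hx; exact hx.1) (hIcc hx).2,
    intervalIntegral.integral_add (f := fun x => -log x)
      intervalIntegral.intervalIntegrable_log'.neg
      ((continuousOn_logGammaOneAddSubLogGammaOneSub.mono hIcc).intervalIntegrable),
    intervalIntegral.integral_neg, integral_log]
  simp

theorem fthree_eq_averages {t : ℝ} (ht0 : 2 / 3 < t) (ht1 : t < 1) :
    fthree t = -(1 / 2) * log π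
      - (1 / 2) * (((3 * t - 2) / 2 - 0)⁻¹ •
          ∫ x in (0 : ℝ)..(3 * t - 2) / 2, logGammaOneAddSubLogGammaOneSub x)
      + (3 / 2) * ((t - (t - (3 * t - 2) / 2))⁻¹ •
          ∫ x in (t - (3 * t - 2) / 2)..t, log (l x)) := by
  have hs : 0 < (3 * t - 2) / 2 := by linarith
  have hV : 3 * t - 2 ≠ 0 := by linarith
  rw [fthree, integral_log_l hs (by linarith), mul_div_assoc, log_mul pi_ne_zero hs.ne',
    show t - (t - (3 * t - 2) / 2) = (3 * t - 2) / 2 by ring, sub_zero, smul_eq_mul, smul_eq_mul]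
  field_simp
  ring

theorem fthree_limit_at_log_calabi_yau :
    Tendsto fthree (nhdsWithin (2 / 3) (Set.Ioi (2 / 3)))
      (nhds (-(1 / 2) * Real.log Real.pi
        + (3 / 2) * Real.log (Real.Gamma (2 / 3) / Real.Gamma (1 / 3)))) := by
  have hV : Tendsto (fun t : ℝ => (3 * t - 2) / 2) (𝓝[>] (2 / 3)) (𝓝 0) :=
    tendsto_nhdsWithin_of_tendsto_nhds ((Continuous.tendsto' (by fun_prop) _ _) (by norm_num))
  have hleft : Tendsto (fun t : ℝ => t - (3 * t - 2) / 2) (𝓝[>] (2 / 3)) (𝓝 (2 / 3)) :=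
    tendsto_nhdsWithin_of_tendsto_nhds ((Continuous.tendsto' (by fun_prop) _ _) (by norm_num))
  have hVpos : ∀ᶠ t in 𝓝[>] (2 / 3 : ℝ), 0 < (3 * t - 2) / 2 :=
    eventually_nhdsWithin_of_forall fun t ht => by linarith [mem_Ioi.mp ht]
  have hsingular := tendsto_inv_smul_integral_of_continuousAt
    (continuousOn_logGammaOneAddSubLogGammaOneSub.stronglyMeasurableAtFilter isOpen_Ioo 0
      (by norm_num))
    (continuousOn_logGammaOneAddSubLogGammaOneSub.continuousAt (Ioo_mem_nhds (by norm_num)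
      (by norm_num))) tendsto_const_nhds hV (hVpos.mono fun _ h => h.ne)
  have hregular := tendsto_inv_smul_integral_of_continuousAt
    (continuousOn_log_l.stronglyMeasurableAtFilter isOpen_Ioo (2 / 3) (by norm_num))
    (continuousOn_log_l.continuousAt (Ioo_mem_nhds (by norm_num) (by norm_num)))
    hleft (tendsto_nhdsWithin_of_tendsto_nhds tendsto_id : Tendsto (fun t : ℝ => t) _ _)
    (hVpos.mono fun _ h => by linarith)
  have hlimit := (tendsto_const_nhds (x := -(1 / 2) * log π)).sub (hsingular.const_mul (1 / 2))
    |>.add (hregular.const_mul (3 / 2))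
  have hl : l (2 / 3) = Gamma (2 / 3) / Gamma (1 / 3) := by norm_num [l]
  have hG0 : logGammaOneAddSubLogGammaOneSub 0 = 0 := by simp [logGammaOneAddSubLogGammaOneSub]
  rw [hG0, hl, mul_zero, sub_zero] at hlimit
  refine hlimit.congr' ?_
  filter_upwards [Ioo_mem_nhdsGT (show (2 / 3 : ℝ) < 1 by norm_num)] with t ht
  exact (fthree_eq_averages ht.1 ht.2).symm
end
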